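/- Fix r ≥ 0, s ∈ ℝ, let j = max{i : γ(x_i) ≤ s}, and for 0 ≤ i ≤ j let U_i = SelDel_r(X_j, X_i) ∪ Del_{r,s}(γ). If σ ∈ U_{i−1} \ U_i, then both σ \ {x_i} and σ ∪ {x_i} lie in U_{i−1} \ U_i; consequently U_{i−1} \ U_i is partitioned into pairs (σ − x_i, σ + x_i), giving a gradient vector field whose collapse shows U_{i−1} ↘ U_i, and hence Čech_{r,s}(γ) ↘ Del_{r,s}(γ). -/

import Mathlib

/-!
Bauer–Edelsbrunner pairing. If `σ ∈ SelDel_r(X_j, X_{i-1})` but `σ ∉ SelDel_r(X_j, X_i)`, every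
sphere witnessing the former has `x_i` strictly inside, so it also witnesses `σ + x_i`. If
`σ - x_i` had a witness with `x_i` on or outside it, some sphere of the pencil spanned by the two
witnesses would pass through `x_i`; the power of a point is affine along the pencil, so that
sphere would witness `σ ∈ SelDel_r(X_j, X_i)`. Hence `U_{i-1} \ U_i` is closed under removing and
adding `x_i`, and it splits into pairs `(σ - x_i, σ + x_i)`. Since `U_i` is closed under faces,
the pair whose coface has the most vertices is always free, and removing the pairs one by one
collapses `U_{i-1}` onto `U_i`. Chaining these collapses from `U_{-1} = Čech_{r,s}(γ)` to
`U_j = Del_{r,s}(γ)` gives the last claim.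
-/

open Finset

variable {d n : ℕ}

/-- `σ ∈ SelDel_r(Y, E)`: `σ` is a nonempty subset of `Y` admitting a sphere of radius at
most `r` with all of `σ` on or inside and no point of `E` strictly inside. -/
def SelDelMem (x : Fin n → EuclideanSpace ℝ (Fin d)) (Y E : Finset (Fin n)) (r : ℝ)
    (σ : Finset (Fin n)) : Prop :=
  σ.Nonempty ∧ σ ⊆ Y ∧
    ∃ (c : EuclideanSpace ℝ (Fin d)) (r' : ℝ), r' ≤ r ∧
      (∀ i ∈ σ, dist (x i) c ≤ r') ∧ ∀ i ∈ E, r' ≤ dist (x i) c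

/-- `σ ∈ Del_{r,s}(γ)`: `γ(max σ) ≤ s` and `σ ∈ SelDel_r(X_k, X_{k-1})` where
`x_k = max σ`. -/
def DelBiMem (x : Fin n → EuclideanSpace ℝ (Fin d)) (γ : Fin n → ℝ) (r s : ℝ)
    (σ : Finset (Fin n)) : Prop :=
  ∃ h : σ.Nonempty, γ (σ.max' h) ≤ s ∧
    SelDelMem x (Finset.univ.filter fun t => t ≤ σ.max' h)
      (Finset.univ.filter fun t => t < σ.max' h) r σ

/-- An elementary (free-face) collapse between abstract simplicial complexes. -/
def ElemCollapse (K L : Set (Finset (Fin n))) : Prop :=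
  ∃ σ τ : Finset (Fin n), σ ∈ K ∧ τ ∈ K ∧ σ ⊂ τ ∧
    (∀ υ ∈ K, σ ⊂ υ → υ = τ) ∧ L = K \ {σ, τ}

/-- `K ↘ L`: a finite sequence of elementary collapses from `K` to `L`. -/
def CollapsesTo (K L : Set (Finset (Fin n))) : Prop :=
  Relation.ReflTransGen (fun A B => ElemCollapse A B) K L

/-- The filtration step `U_{i-1} = SelDel_r(X_j, X_{i-1}) ∪ Del_{r,s}(γ)`, i.e. the complex
just before processing the point `x_i`. -/
def Ubefore (x : Fin n → EuclideanSpace ℝ (Fin d)) (γ : Fin n → ℝ) (r s : ℝ)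
    (j i : Fin n) : Set (Finset (Fin n)) :=
  {σ | SelDelMem x (Finset.univ.filter fun t => t ≤ j)
        (Finset.univ.filter fun t => t < i) r σ ∨ DelBiMem x γ r s σ}

/-- The filtration step `U_i = SelDel_r(X_j, X_i) ∪ Del_{r,s}(γ)`. -/
def Uafter (x : Fin n → EuclideanSpace ℝ (Fin d)) (γ : Fin n → ℝ) (r s : ℝ)
    (j i : Fin n) : Set (Finset (Fin n)) :=
  {σ | SelDelMem x (Finset.univ.filter fun t => t ≤ j)
        (Finset.univ.filter fun t => t ≤ i) r σ ∨ DelBiMem x γ r s σ}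

section Pencil

variable {E : Type*} [NormedAddCommGroup E] [InnerProductSpace ℝ E]

theorem dist_sq_lineMap (p c₀ c₁ : E) (t : ℝ) :
    dist p (AffineMap.lineMap c₀ c₁ t) ^ 2 =
      (1 - t) * dist p c₀ ^ 2 + t * dist p c₁ ^ 2 - t * (1 - t) * dist c₀ c₁ ^ 2 := by
  have hp : p - AffineMap.lineMap c₀ c₁ t = (p - c₀) + t • (c₀ - c₁) := by
    rw [AffineMap.lineMap_apply_module]
    module
  have hp₁ : p - c₁ = (p - c₀) + (c₀ - c₁) := by abel
  simp only [dist_eq_norm, hp, hp₁, norm_add_sq_real, inner_smul_right, norm_smul,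
    Real.norm_eq_abs, mul_pow, sq_abs]
  ring

theorem exists_sphere_mem_pencil_through {q c₀ c₁ : E} {ρ₀ ρ₁ : ℝ}
    (h₀ : dist q c₀ ^ 2 < ρ₀) (h₁ : ρ₁ ≤ dist q c₁ ^ 2) :
    ∃ t ∈ Set.Icc (0 : ℝ) 1, ∃ (c : E) (ρ : ℝ), dist q c ^ 2 = ρ ∧ ρ ≤ (1 - t) * ρ₀ + t * ρ₁ ∧
      ∀ p, dist p c ^ 2 - ρ = (1 - t) * (dist p c₀ ^ 2 - ρ₀) + t * (dist p c₁ ^ 2 - ρ₁) := by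
  set a := dist q c₀ ^ 2 - ρ₀
  set b := dist q c₁ ^ 2 - ρ₁
  have hab : a - b < 0 := by linarith
  set t := a / (a - b)
  have ht : t * (a - b) = a := div_mul_cancel₀ a hab.ne
  have ht₀ : 0 ≤ t := div_nonneg_of_nonpos (by linarith) hab.le
  have ht₁ : t ≤ 1 := (div_le_one_of_neg hab).mpr (by linarith)
  set ρ := (1 - t) * ρ₀ + t * ρ₁ - t * (1 - t) * dist c₀ c₁ ^ 2
  have hpow : ∀ p, dist p (AffineMap.lineMap c₀ c₁ t) ^ 2 - ρ =
      (1 - t) * (dist p c₀ ^ 2 - ρ₀) + t * (dist p c₁ ^ 2 - ρ₁) := fun p => by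
    rw [dist_sq_lineMap]; ring
  refine ⟨t, ⟨ht₀, ht₁⟩, _, ρ, ?_, ?_, hpow⟩
  · linear_combination hpow q - ht
  · nlinarith [mul_nonneg ht₀ (sub_nonneg.mpr ht₁), sq_nonneg (dist c₀ c₁)]

end Pencil

section SelDel

variable {x : Fin n → EuclideanSpace ℝ (Fin d)} {r : ℝ} {Y E σ : Finset (Fin n)}

theorem SelDelMem.mono {Y' E' τ : Finset (Fin n)} (h : SelDelMem x Y E r σ) (hτ : τ.Nonempty)
    (hτσ : τ ⊆ σ) (hτY : τ ⊆ Y') (hE : E' ⊆ E) : SelDelMem x Y' E' r τ := by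
  obtain ⟨-, -, c, r', hr', hin, hout⟩ := h
  exact ⟨hτ, hτY, c, r', hr', fun p hp => hin p (hτσ hp), fun p hp => hout p (hE hp)⟩

theorem SelDelMem.radius_nonneg (h : SelDelMem x Y E r σ) : 0 ≤ r := by
  obtain ⟨⟨p, hp⟩, -, _, r', hr', hin, -⟩ := h
  exact dist_nonneg.trans ((hin p hp).trans hr')

theorem SelDelMem.exists_sq (h : SelDelMem x Y E r σ) :
    ∃ (c : EuclideanSpace ℝ (Fin d)) (ρ : ℝ), ρ ≤ r ^ 2 ∧
      (∀ p ∈ σ, dist (x p) c ^ 2 ≤ ρ) ∧ ∀ p ∈ E, ρ ≤ dist (x p) c ^ 2 := by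
  obtain ⟨⟨p₀, hp₀⟩, -, c, r', hr', hin, hout⟩ := h
  have hr'₀ : 0 ≤ r' := dist_nonneg.trans (hin p₀ hp₀)
  exact ⟨c, r' ^ 2, pow_le_pow_left₀ hr'₀ hr' 2,
    fun p hp => pow_le_pow_left₀ dist_nonneg (hin p hp) 2,
    fun p hp => pow_le_pow_left₀ hr'₀ (hout p hp) 2⟩

theorem selDelMem_of_sq (hr : 0 ≤ r) (hσ : σ.Nonempty) (hσY : σ ⊆ Y)
    (c : EuclideanSpace ℝ (Fin d)) {ρ : ℝ} (hρ : ρ ≤ r ^ 2)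
    (hin : ∀ p ∈ σ, dist (x p) c ^ 2 ≤ ρ) (hout : ∀ p ∈ E, ρ ≤ dist (x p) c ^ 2) :
    SelDelMem x Y E r σ := by
  refine ⟨hσ, hσY, c, √ρ, (Real.sqrt_le_left hr).mpr hρ,
    fun p hp => (le_abs_self _).trans (Real.abs_le_sqrt (hin p hp)),
    fun p hp => (Real.sqrt_le_left dist_nonneg).mpr (hout p hp)⟩

variable {q : Fin n}

theorem SelDelMem.exists_sq_of_not_insert (h : SelDelMem x Y E r σ)
    (hq : ¬ SelDelMem x Y (insert q E) r σ) :
    ∃ (c : EuclideanSpace ℝ (Fin d)) (ρ : ℝ), ρ ≤ r ^ 2 ∧ (∀ p ∈ σ, dist (x p) c ^ 2 ≤ ρ) ∧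
      (∀ p ∈ E, ρ ≤ dist (x p) c ^ 2) ∧ dist (x q) c ^ 2 < ρ := by
  obtain ⟨c, ρ, hρ, hin, hout⟩ := h.exists_sq
  refine ⟨c, ρ, hρ, hin, hout, lt_of_not_ge fun hqc => hq ?_⟩
  exact selDelMem_of_sq h.radius_nonneg h.1 h.2.1 c hρ hin
    ((forall_mem_insert _ _ _).mpr ⟨hqc, hout⟩)

theorem SelDelMem.erase_not_insert (h : SelDelMem x Y E r σ)
    (hq : ¬ SelDelMem x Y (insert q E) r σ) :
    ¬ SelDelMem x Y (insert q E) r (σ.erase q) := by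
  intro he
  obtain ⟨c₀, ρ₀, hρ₀, hin₀, hout₀, hq₀⟩ := h.exists_sq_of_not_insert hq
  obtain ⟨c₁, ρ₁, hρ₁, hin₁, hout₁⟩ := he.exists_sq
  obtain ⟨t, ⟨ht₀, ht₁⟩, c, ρ, hqc, hρ, hpow⟩ :=
    exists_sphere_mem_pencil_through hq₀ (hout₁ q (mem_insert_self q E))
  refine hq (selDelMem_of_sq h.radius_nonneg h.1 h.2.1 c (by nlinarith) (fun p hp => ?_)
    ((forall_mem_insert _ _ _).mpr ⟨hqc.ge, fun p hp => ?_⟩))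
  · rcases eq_or_ne p q with rfl | hpq
    · exact hqc.le
    · nlinarith [hpow (x p), hin₀ p hp, hin₁ p (mem_erase.mpr ⟨hpq, hp⟩)]
  · nlinarith [hpow (x p), hout₀ p hp, hout₁ p (mem_insert_of_mem hp)]

theorem SelDelMem.insert_of_not_insert (hqY : q ∈ Y) (h : SelDelMem x Y E r σ)
    (hq : ¬ SelDelMem x Y (insert q E) r σ) : SelDelMem x Y E r (insert q σ) := by
  obtain ⟨c, ρ, hρ, hin, hout, hqc⟩ := h.exists_sq_of_not_insert hq
  exact selDelMem_of_sq h.radius_nonneg (insert_nonempty q σ) (insert_subset hqY h.2.1) c hρ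
    ((forall_mem_insert _ _ _).mpr ⟨hqc.le, hin⟩) hout

theorem SelDelMem.erase_nonempty_of_not_insert (h : SelDelMem x Y E r σ)
    (hq : ¬ SelDelMem x Y (insert q E) r σ) : (σ.erase q).Nonempty := by
  rw [nonempty_iff_ne_empty, Ne, erase_eq_empty_iff]
  rintro (rfl | rfl)
  · exact not_nonempty_empty h.1
  · exact hq ⟨singleton_nonempty q, h.2.1, x q, 0, h.radius_nonneg, by simp,
      fun p _ => dist_nonneg⟩

/-- The Bauer–Edelsbrunner pairing lemma. -/
theorem selDelMem_pairing (hqY : q ∈ Y) (h : SelDelMem x Y E r σ)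
    (hq : ¬ SelDelMem x Y (insert q E) r σ) :
    (SelDelMem x Y E r (σ.erase q) ∧ ¬ SelDelMem x Y (insert q E) r (σ.erase q)) ∧
      (SelDelMem x Y E r (insert q σ) ∧ ¬ SelDelMem x Y (insert q E) r (insert q σ)) :=
  ⟨⟨h.mono (h.erase_nonempty_of_not_insert hq) (erase_subset q σ)
      ((erase_subset q σ).trans h.2.1) subset_rfl, h.erase_not_insert hq⟩,
    ⟨h.insert_of_not_insert hqY hq,
      fun hi => hq (hi.mono h.1 (subset_insert q σ) h.2.1 subset_rfl)⟩⟩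

end SelDel

section Filtration

variable {x : Fin n → EuclideanSpace ℝ (Fin d)} {γ : Fin n → ℝ} {r s : ℝ} {σ τ : Finset (Fin n)}

theorem DelBiMem.of_subset (hγ : Monotone γ) (h : DelBiMem x γ r s σ) (hτ : τ.Nonempty)
    (hτσ : τ ⊆ σ) : DelBiMem x γ r s τ := by
  obtain ⟨hσ, hγσ, hsel⟩ := h
  have hmax : τ.max' hτ ≤ σ.max' hσ := max'_subset hτ hτσ
  refine ⟨hτ, (hγ hmax).trans hγσ,
    hsel.mono hτ hτσ (fun p hp => by simpa using le_max' τ p hp) fun t ht => ?_⟩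
  simp only [mem_filter, mem_univ, true_and] at ht ⊢
  exact ht.trans_le hmax

theorem delBiMem_of_selDelMem {j : Fin n} {E : Finset (Fin n)} (hγ : Monotone γ)
    (hj : γ j ≤ s) (h : SelDelMem x (univ.filter fun t => t ≤ j) E r σ)
    (hE : ∀ t, (∃ p ∈ σ, t < p) → t ∈ E) : DelBiMem x γ r s σ := by
  have hmax : σ.max' h.1 ≤ j := by simpa using h.2.1 (max'_mem σ h.1)
  refine ⟨h.1, (hγ hmax).trans hj, h.mono h.1 subset_rfl
    (fun p hp => by simpa using le_max' σ p hp) fun t ht => hE t ⟨_, max'_mem σ h.1, ?_⟩⟩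
  simpa using ht

theorem DelBiMem.selDelMem {Y E : Finset (Fin n)} (h : DelBiMem x γ r s σ) (hσY : σ ⊆ Y)
    (hE : ∀ t ∈ E, ∃ p ∈ σ, t < p) : SelDelMem x Y E r σ := by
  obtain ⟨hσ, -, hsel⟩ := h
  refine hsel.mono hσ subset_rfl hσY fun t ht => ?_
  obtain ⟨p, hp, htp⟩ := hE t ht
  simpa using htp.trans_le (le_max' σ p hp)

theorem filter_le_eq_insert_filter_lt (i : Fin n) :
    (univ.filter fun t => t ≤ i) = insert i (univ.filter fun t => t < i) := by
  ext t
  simp [le_iff_eq_or_lt]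

variable {j i : Fin n}

theorem uafter_subset_ubefore : Uafter x γ r s j i ⊆ Ubefore x γ r s j i :=
  fun _ => Or.imp_left fun h => h.mono h.1 subset_rfl h.2.1 fun t => by simpa using le_of_lt

theorem uafter_of_subset (hγ : Monotone γ) (hσ : σ ∈ Uafter x γ r s j i)
    (hτ : τ ∈ Ubefore x γ r s j i) (hτσ : τ ⊆ σ) : τ ∈ Uafter x γ r s j i := by
  have hτ' : τ.Nonempty := hτ.elim (·.1) (·.1)
  exact hσ.imp (fun h => h.mono hτ' hτσ (hτσ.trans h.2.1) subset_rfl)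
    fun h => h.of_subset hγ hτ' hτσ

theorem ubefore_pairing (hγ : Monotone γ) (hj : γ j ≤ s) (hij : i ≤ j)
    (hσ : σ ∈ Ubefore x γ r s j i) (hσ' : σ ∉ Uafter x γ r s j i) :
    (σ.erase i ∈ Ubefore x γ r s j i ∧ σ.erase i ∉ Uafter x γ r s j i) ∧
      (insert i σ ∈ Ubefore x γ r s j i ∧ insert i σ ∉ Uafter x γ r s j i) := by
  simp only [Ubefore, Uafter, Set.mem_ofPred_eq, not_or] at hσ hσ' ⊢
  obtain ⟨hsel, hdel⟩ := hσ'
  have h := hσ.resolve_right hdel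
  rw [filter_le_eq_insert_filter_lt i] at hsel ⊢
  obtain ⟨⟨he, he'⟩, hi, hi'⟩ := selDelMem_pairing (by simpa using hij) h hsel
  -- otherwise `X_{<i}` would contain every point below `max σ`, putting `σ` in `Del`
  obtain ⟨p, hp, hip⟩ : ∃ p ∈ σ, i < p := by
    by_contra! hle
    refine hdel (delBiMem_of_selDelMem hγ hj h fun t ⟨p, hp, htp⟩ => ?_)
    simpa using htp.trans_le (hle p hp)
  refine ⟨⟨Or.inl he, he', fun hd => he' (hd.selDelMem ((erase_subset i σ).trans h.2.1) ?_)⟩,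
    ⟨Or.inl hi, hi', fun hd => hdel (hd.of_subset hγ h.1 (subset_insert i σ))⟩⟩
  intro t ht
  have hti : t ≤ i := by simpa [le_iff_eq_or_lt] using ht
  exact ⟨p, mem_erase.mpr ⟨hip.ne', hp⟩, hti.trans_lt hip⟩

end Filtration

theorem Finset.erase_eq_erase_iff {α : Type*} [DecidableEq α] {s t : Finset α} {a : α}
    (ha : a ∈ t) : s.erase a = t.erase a ↔ s = t.erase a ∨ s = t := by
  by_cases has : a ∈ s
  · have hst : s ≠ t.erase a := fun h => notMem_erase a t (h ▸ has)
    simp [hst, (erase_injOn' a).eq_iff has ha]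
  · have hst : s ≠ t := fun h => has (h ▸ ha)
    simp [erase_eq_of_notMem has, hst]

section Collapse

variable {K L : Set (Finset (Fin n))} {q : Fin n}

theorem elemCollapse_of_card_le (hL : ∀ σ ∈ L, ∀ τ ∈ K, τ ⊆ σ → τ ∈ L)
    (hpair : ∀ σ ∈ K \ L, σ.erase q ∈ K \ L ∧ insert q σ ∈ K \ L)
    {τ : Finset (Fin n)} (hτ : τ ∈ K \ L) (hτmax : ∀ υ ∈ K \ L, υ.card ≤ τ.card) :
    q ∈ τ ∧ ElemCollapse K (K \ {τ.erase q, τ}) := by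
  have hqτ : q ∈ τ := by
    by_contra h
    have := hτmax _ (hpair τ hτ).2
    rw [card_insert_of_notMem h] at this
    omega
  obtain ⟨⟨hσK, hσL⟩, -⟩ := hpair τ hτ
  refine ⟨hqτ, τ.erase q, τ, hσK, hτ.1, erase_ssubset hqτ, fun υ hυ hsub => ?_, rfl⟩
  have hυL : υ ∉ L := fun h => hσL (hL υ h _ hσK hsub.subset)
  have hlt := card_lt_card hsub
  rw [card_erase_of_mem hqτ] at hlt
  have hqυ : q ∈ υ := by
    by_contra h
    have := hτmax _ (hpair υ ⟨hυ, hυL⟩).2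
    rw [card_insert_of_notMem h] at this
    omega
  have hsub' : τ.erase q ⊆ υ.erase q := by
    simpa only [erase_idem] using erase_subset_erase q hsub.subset
  have hυτ : υ.erase q = τ.erase q := by
    refine (eq_of_subset_of_card_le hsub' ?_).symm
    rw [card_erase_of_mem hqυ, card_erase_of_mem hqτ]
    exact Nat.sub_le_sub_right (hτmax υ ⟨hυ, hυL⟩) 1
  exact ((erase_eq_erase_iff hqτ).mp hυτ).resolve_left hsub.ne'

theorem collapsesTo_of_pairing (q : Fin n) (hLK : L ⊆ K)
    (hL : ∀ σ ∈ L, ∀ τ ∈ K, τ ⊆ σ → τ ∈ L)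
    (hpair : ∀ σ ∈ K \ L, σ.erase q ∈ K \ L ∧ insert q σ ∈ K \ L) : CollapsesTo K L := by
  induction hN : (K \ L).ncard using Nat.strong_induction_on generalizing K with
  | _ N ih =>
  rcases (K \ L).eq_empty_or_nonempty with h | hne
  · rw [(Set.sdiff_eq_empty.mp h).antisymm hLK]
    exact Relation.ReflTransGen.refl
  obtain ⟨τ, hτ, hτmax⟩ := Set.exists_max_image _ card (Set.toFinite _) hne
  obtain ⟨hqτ, hstep⟩ := elemCollapse_of_card_le hL hpair hτ hτmax
  have hdiff : (K \ {τ.erase q, τ}) \ L = {σ ∈ K \ L | σ.erase q ≠ τ.erase q} := by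
    ext σ
    simp only [Set.mem_sdiff, Set.mem_insert_iff, Set.mem_singleton_iff, Set.mem_ofPred_eq,
      Ne, erase_eq_erase_iff hqτ]
    tauto
  refine .head hstep (ih _ ?_ ?_ ?_ ?_ rfl)
  · rw [← hN, hdiff]
    exact Set.ncard_lt_ncard ((Set.ssubset_iff_of_subset (Set.sep_subset _ _)).mpr ⟨τ, hτ, by simp⟩)
  · rintro σ hσ
    refine ⟨hLK hσ, ?_⟩
    rintro (rfl | rfl)
    exacts [(hpair τ hτ).1.2 hσ, hτ.2 hσ]
  · exact fun σ hσ υ hυ => hL σ hσ υ hυ.1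
  · rw [hdiff]
    rintro σ ⟨hσ, hσq⟩
    exact ⟨⟨(hpair σ hσ).1, by rwa [erase_idem]⟩, ⟨(hpair σ hσ).2, by rwa [erase_insert_eq_erase]⟩⟩

end Collapse

section Chain

variable {x : Fin n → EuclideanSpace ℝ (Fin d)} {γ : Fin n → ℝ} {r s : ℝ} {j i : Fin n}

theorem collapsesTo_ubefore_uafter (hγ : Monotone γ) (hj : γ j ≤ s) (hij : i ≤ j) :
    CollapsesTo (Ubefore x γ r s j i) (Uafter x γ r s j i) :=
  collapsesTo_of_pairing i uafter_subset_ubefore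
    (fun _ hσ _ hτ hτσ => uafter_of_subset hγ hσ hτ hτσ) fun _ hσ =>
    ubefore_pairing hγ hj hij hσ.1 hσ.2

theorem uafter_eq_ubefore_of_val_eq_succ {i' : Fin n} (h : (i' : ℕ) = i + 1) :
    Uafter x γ r s j i = Ubefore x γ r s j i' := by
  have hfilter : (univ.filter fun t => t ≤ i) = univ.filter fun t => t < i' := by
    ext t
    simp only [mem_filter, mem_univ, true_and, Fin.lt_def, Fin.le_def]
    omega
  simp only [Uafter, Ubefore, hfilter]

theorem uafter_self (hγ : Monotone γ) (hj : γ j ≤ s) :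
    Uafter x γ r s j j = {σ | DelBiMem x γ r s σ} :=
  Set.ext fun _ => or_iff_right_of_imp fun h => delBiMem_of_selDelMem hγ hj h
    fun _ ⟨_, hp, htp⟩ => by simpa using htp.le.trans (by simpa using h.2.1 hp)

theorem ubefore_first (hjmax : ∀ i, γ i ≤ s → i ≤ j) :
    Ubefore x γ r s j ⟨0, j.pos⟩ =
      {σ | SelDelMem x (univ.filter fun t => t ≤ j) (∅ : Finset (Fin n)) r σ} := by
  have hfilter : (univ.filter fun t : Fin n => t < ⟨0, j.pos⟩) = ∅ := by
    ext t
    simp [Fin.lt_def]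
  ext σ
  simp only [Ubefore, hfilter, Set.mem_ofPred_eq, or_iff_left_iff_imp]
  intro h
  refine h.selDelMem (fun p hp => ?_) (by simp)
  obtain ⟨hσ, hγσ, -⟩ := h
  simpa using (le_max' σ p hp).trans (hjmax _ hγσ)

theorem collapsesTo_ubefore_delBiMem (hγ : Monotone γ) (hj : γ j ≤ s) (hij : i ≤ j) :
    CollapsesTo (Ubefore x γ r s j i) {σ | DelBiMem x γ r s σ} := by
  induction hk : (j : ℕ) - i generalizing i with
  | zero =>
    obtain rfl : i = j := le_antisymm hij (Fin.le_def.mpr (by omega))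
    rw [← uafter_self hγ hj]
    exact collapsesTo_ubefore_uafter hγ hj le_rfl
  | succ k ih =>
    have hi : (i : ℕ) + 1 < n := by omega
    refine (collapsesTo_ubefore_uafter hγ hj hij).trans ?_
    rw [uafter_eq_ubefore_of_val_eq_succ (i' := ⟨i + 1, hi⟩) rfl]
    exact ih (Fin.le_def.mpr (by simp; omega)) (by simp; omega)

end Chain

theorem cech_collapses_to_del_general (x : Fin n → EuclideanSpace ℝ (Fin d))
    (γ : Fin n → ℝ) (hγ : Monotone γ) (r s : ℝ)
    (j : Fin n) (hj : γ j ≤ s) (hjmax : ∀ i, γ i ≤ s → i ≤ j) :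
    (∀ i : Fin n, i ≤ j → ∀ σ : Finset (Fin n),
        σ ∈ Ubefore x γ r s j i → σ ∉ Uafter x γ r s j i →
        (σ.erase i ∈ Ubefore x γ r s j i ∧ σ.erase i ∉ Uafter x γ r s j i) ∧
        (insert i σ ∈ Ubefore x γ r s j i ∧ insert i σ ∉ Uafter x γ r s j i)) ∧
    (∀ i : Fin n, i ≤ j →
        CollapsesTo (Ubefore x γ r s j i) (Uafter x γ r s j i)) ∧
    CollapsesTo
      {σ | SelDelMem x (Finset.univ.filter fun t => t ≤ j) (∅ : Finset (Fin n)) r σ}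
      {σ | DelBiMem x γ r s σ} := by
  refine ⟨fun i hij σ hσ hσ' => ubefore_pairing hγ hj hij hσ hσ',
    fun i hij => collapsesTo_ubefore_uafter hγ hj hij, ?_⟩
  rw [← ubefore_first hjmax]
  exact collapsesTo_ubefore_delBiMem hγ hj (Fin.le_def.mpr (Nat.zero_le _))

/-- If `σ ∈ U_{i-1} \ U_i` then both `σ - x_i` and `σ + x_i` lie in `U_{i-1} \ U_i`; hence
`U_{i-1} \ U_i` is partitioned into pairs forming a gradient whose collapse gives
`U_{i-1} ↘ U_i`, and consequently `Čech_{r,s}(γ) ↘ Del_{r,s}(γ)`. -/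
theorem cech_collapses_to_del (x : Fin n → EuclideanSpace ℝ (Fin d))
    (hinj : Function.Injective x)
    (γ : Fin n → ℝ) (hγ : Monotone γ) (r s : ℝ) (hr : 0 ≤ r)
    (j : Fin n) (hj : γ j ≤ s) (hjmax : ∀ i, γ i ≤ s → i ≤ j) :
    (∀ i : Fin n, i ≤ j → ∀ σ : Finset (Fin n),
        σ ∈ Ubefore x γ r s j i → σ ∉ Uafter x γ r s j i →
        (σ.erase i ∈ Ubefore x γ r s j i ∧ σ.erase i ∉ Uafter x γ r s j i) ∧
        (insert i σ ∈ Ubefore x γ r s j i ∧ insert i σ ∉ Uafter x γ r s j i)) ∧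
    (∀ i : Fin n, i ≤ j →
        CollapsesTo (Ubefore x γ r s j i) (Uafter x γ r s j i)) ∧
    CollapsesTo
      {σ | SelDelMem x (Finset.univ.filter fun t => t ≤ j) (∅ : Finset (Fin n)) r σ}
      {σ | DelBiMem x γ r s σ} :=
  cech_collapses_to_del_general x γ hγ r s j hj hjmax
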